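/- Let D be a digraph with a partition V(D) = A⁺ ∪ A⁻ ∪ R such that there are no edges from R to A⁺, no edges from A⁻ to R, and no edges within A⁺ ∪ A⁻. If the induced subdigraph D[R] has a perfect decomposition, then D has a perfect decomposition. -/

import Mathlib

/-!
Start from a perfect decomposition of `D[R]` and add the remaining edges one at a time. Every such
edge leaves a source (a vertex of `A⁺`) or enters a sink (a vertex of `A⁻`). Adding an edge `a → r`
out of a source raises `ex⁺(a)` by one and lowers `ex⁺(r)` by one exactly when `r` has positive
excess. In that case some path of the decomposition starts at `r`, because a vertex at which no path
starts has out-degree at most its in-degree, and `a` is prepended to that path; otherwise `[a, r]`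
becomes a new path. Edges into sinks are handled by reversing every edge.
-/

open Finset

variable {V : Type*}

/-- Out-degree of a vertex in a digraph. -/
noncomputable def outDeg (D : V → V → Prop) (v : V) : ℕ := Nat.card {u // D v u}

/-- In-degree of a vertex in a digraph. -/
noncomputable def inDeg (D : V → V → Prop) (v : V) : ℕ := Nat.card {u // D u v}

/-- The (signed) excess of a vertex: `d⁺(v) − d⁻(v)`. -/
noncomputable def exInt (D : V → V → Prop) (v : V) : ℤ :=
  (outDeg D v : ℤ) - (inDeg D v : ℤ)

/-- Positive excess `ex⁺(v) = max{d⁺(v)−d⁻(v),0}`. -/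
noncomputable def exPlus (D : V → V → Prop) (v : V) : ℕ := (exInt D v).toNat

/-- Negative excess `ex⁻(v) = max{d⁻(v)−d⁺(v),0}`. -/
noncomputable def exMinus (D : V → V → Prop) (v : V) : ℕ := (-(exInt D v)).toNat

/-- The excess of a digraph: `ex(D) = ∑_v ex⁺(v) = (1/2)∑_v |ex(v)|`. -/
noncomputable def exD [Fintype V] (D : V → V → Prop) : ℕ := ∑ v, exPlus D v

/-- The list of (directed) edges traversed by a path, given as its list of vertices. -/
def pathEdges (p : List V) : List (V × V) := p.zip p.tail

/-- A directed path of `D` with at least one edge, given by its list of (distinct) vertices. -/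
def IsPath (D : V → V → Prop) (p : List V) : Prop :=
  p.Nodup ∧ 2 ≤ p.length ∧ ∀ e ∈ pathEdges p, D e.1 e.2

/-- A path decomposition of `D`: a list of paths whose edge sets partition `E(D)`. -/
def IsPathDecomp (D : V → V → Prop) (Ps : List (List V)) : Prop :=
  (∀ p ∈ Ps, IsPath D p) ∧ ((Ps.map pathEdges).flatten.Nodup) ∧
    ∀ u v : V, D u v ↔ (u, v) ∈ (Ps.map pathEdges).flatten

def HasPerfectDecomp [Fintype V] (D : V → V → Prop) : Prop :=
  ∃ Qs : List (List V), IsPathDecomp D Qs ∧ Qs.length = exD D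

def addEdge (D : V → V → Prop) (a b : V) : V → V → Prop := fun u w => D u w ∨ u = a ∧ w = b

section Paths

lemma pathEdges_cons_cons (x y : V) (t : List V) :
    pathEdges (x :: y :: t) = (x, y) :: pathEdges (y :: t) := rfl

lemma map_fst_pathEdges : ∀ p : List V, (pathEdges p).map Prod.fst = p.dropLast
  | [] => rfl
  | [_] => rfl
  | x :: y :: t => by rw [pathEdges_cons_cons, List.map_cons, map_fst_pathEdges (y :: t)]; simp

lemma map_snd_pathEdges (p : List V) : (pathEdges p).map Prod.snd = p.tail :=
  List.map_snd_zip (by simp)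

lemma pathEdges_append_singleton : ∀ (p : List V) (x : V),
    pathEdges (p ++ [x]) = pathEdges p ++ (p.getLast?.map (·, x)).toList
  | [], _ => rfl
  | [_], _ => rfl
  | y :: z :: t, x => by
    have ih := pathEdges_append_singleton (z :: t) x
    rw [List.cons_append, List.cons_append, pathEdges_cons_cons, ← List.cons_append, ih,
      pathEdges_cons_cons, List.getLast?_cons_cons]
    rfl

lemma pathEdges_reverse : ∀ p : List V,
    pathEdges p.reverse = ((pathEdges p).map Prod.swap).reverse
  | [] => rfl
  | [_] => rfl
  | x :: y :: t => by
    rw [List.reverse_cons, pathEdges_append_singleton, pathEdges_reverse (y :: t),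
      List.getLast?_reverse, pathEdges_cons_cons]
    simp

variable {D D' : V → V → Prop}

lemma IsPath.mono (hle : D ≤ D') {p : List V} (hp : IsPath D p) : IsPath D' p :=
  ⟨hp.1, hp.2.1, fun e he => hle _ _ (hp.2.2 e he)⟩

lemma IsPath.reverse {p : List V} (hp : IsPath D p) : IsPath (flip D) p.reverse := by
  refine ⟨List.nodup_reverse.2 hp.1, by simpa using hp.2.1, fun e he => ?_⟩
  rw [pathEdges_reverse, List.mem_reverse, List.mem_map] at he
  obtain ⟨e, he, rfl⟩ := he
  exact hp.2.2 e he

end Paths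

section Counting

variable [Fintype V] [DecidableEq V] {D : V → V → Prop}

lemma outDeg_eq_count_of_nodup {F : List (V × V)} (hF : F.Nodup)
    (hD : ∀ u w, D u w ↔ (u, w) ∈ F) (v : V) : outDeg D v = (F.map Prod.fst).count v := by
  classical
  have hmap : (univ.filter (D v)).map (Function.Embedding.sectR v V) =
      F.toFinset.filter (·.1 = v) := by
    ext ⟨u, w⟩
    simp only [mem_map, mem_filter, mem_univ, true_and, Function.Embedding.sectR_apply,
      Prod.mk.injEq, List.mem_toFinset, hD]
    constructor
    · rintro ⟨w, hw, rfl, rfl⟩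
      exact ⟨hw, rfl⟩
    · rintro ⟨hw, rfl⟩
      exact ⟨w, hw, rfl, rfl⟩
  rw [outDeg, Nat.card_eq_fintype_card, Fintype.card_subtype, ← card_map, hmap,
    List.count_eq_countP, List.countP_map, List.countP_eq_length_filter,
    ← List.toFinset_card_of_nodup (hF.filter _), List.toFinset_filter]
  simp

lemma inDeg_eq_count_of_nodup {F : List (V × V)} (hF : F.Nodup)
    (hD : ∀ u w, D u w ↔ (u, w) ∈ F) (v : V) : inDeg D v = (F.map Prod.snd).count v := by
  have hswap : ∀ u w, flip D u w ↔ (u, w) ∈ F.map Prod.swap := by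
    simp [flip, hD]
  have := outDeg_eq_count_of_nodup (hF.map Prod.swap_injective) hswap v
  rwa [List.map_map] at this

end Counting

section Decompositions

variable {D : V → V → Prop} {Qs : List (List V)}

lemma IsPathDecomp.outDeg_eq [Fintype V] [DecidableEq V] (hQ : IsPathDecomp D Qs) (v : V) :
    outDeg D v = (Qs.map fun p => p.dropLast.count v).sum := by
  rw [outDeg_eq_count_of_nodup hQ.2.1 hQ.2.2, List.map_flatten, List.count_flatten, List.map_map,
    List.map_map]
  simp only [Function.comp_def, map_fst_pathEdges]

lemma IsPathDecomp.inDeg_eq [Fintype V] [DecidableEq V] (hQ : IsPathDecomp D Qs) (v : V) :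
    inDeg D v = (Qs.map fun p => p.tail.count v).sum := by
  rw [inDeg_eq_count_of_nodup hQ.2.1 hQ.2.2, List.map_flatten, List.count_flatten, List.map_map,
    List.map_map]
  simp only [Function.comp_def, map_snd_pathEdges]

lemma count_dropLast_le_count_tail [DecidableEq V] {p : List V} {v : V} (h : p.head? ≠ some v) :
    p.dropLast.count v ≤ p.tail.count v := by
  cases p with
  | nil => simp
  | cons a t =>
    calc (a :: t).dropLast.count v ≤ (a :: t).count v := (List.dropLast_sublist _).count_le v
      _ = t.count v := by simpa [List.count_cons] using h

/-- A path that does not start at `v` leaves `v` at most as often as it enters `v`. -/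
lemma IsPathDecomp.exists_head_eq [Fintype V] (hQ : IsPathDecomp D Qs) {v : V}
    (hv : 0 < exInt D v) : ∃ p ∈ Qs, p.head? = some v := by
  classical
  by_contra! h
  have hle : outDeg D v ≤ inDeg D v := by
    rw [hQ.outDeg_eq, hQ.inDeg_eq]
    exact List.sum_le_sum fun p hp => count_dropLast_le_count_tail (h p hp)
  unfold exInt at hv
  omega

lemma IsPathDecomp.reverse (hQ : IsPathDecomp D Qs) :
    IsPathDecomp (flip D) (Qs.map List.reverse) := by
  have hperm : ((Qs.map List.reverse).map pathEdges).flatten.Perm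
      (((Qs.map pathEdges).flatten).map Prod.swap) := by
    rw [List.map_flatten, List.map_map, List.map_map, ← List.flatMap_def, ← List.flatMap_def]
    refine List.Perm.flatMap_left _ fun p _ => ?_
    simp [pathEdges_reverse]
  refine ⟨fun q hq => ?_, hperm.nodup_iff.2 (hQ.2.1.map Prod.swap_injective), fun u w => ?_⟩
  · obtain ⟨p, hp, rfl⟩ := List.mem_map.1 hq
    exact (hQ.1 p hp).reverse
  · rw [hperm.mem_iff, List.mem_map]
    simp [flip, hQ.2.2]

end Decompositions

section Excess

variable [Fintype V]

lemma sum_outDeg_eq_sum_inDeg (D : V → V → Prop) : ∑ v, outDeg D v = ∑ v, inDeg D v := by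
  classical
  have hcard : ∀ D : V → V → Prop, ∀ v, outDeg D v = ∑ u, if D v u then 1 else 0 := by
    intro D v
    rw [outDeg, Nat.card_eq_fintype_card, Fintype.card_subtype, card_filter]
  change _ = ∑ v, outDeg (flip D) v
  simp only [hcard, flip]
  exact sum_comm

lemma exD_flip (D : V → V → Prop) : exD (flip D) = exD D := by
  have hflip : ∀ v, exPlus (flip D) v = exMinus D v := fun v => by
    simp only [exPlus, exMinus, exInt, neg_sub]
    rfl
  have hsum : ∑ v, exInt D v = 0 := by
    rw [sum_congr rfl fun v _ => exInt.eq_def D v, sum_sub_distrib, sub_eq_zero]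
    exact_mod_cast sum_outDeg_eq_sum_inDeg D
  have hz : ∑ v, ((exPlus D v : ℤ) - exMinus D v) = 0 := by
    rw [← hsum]
    exact sum_congr rfl fun v _ => by simp only [exPlus, exMinus]; omega
  simp only [exD, hflip]
  rw [sum_sub_distrib, sub_eq_zero] at hz
  exact_mod_cast hz.symm

end Excess

section AddEdge

variable {D : V → V → Prop} {a r : V}

lemma flip_addEdge : flip (addEdge D a r) = addEdge (flip D) r a := by
  funext u w
  simp only [flip, addEdge, and_comm]

lemma outDeg_addEdge [Fintype V] [DecidableEq V] (har : ¬ D a r) (v : V) :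
    outDeg (addEdge D a r) v = outDeg D v + if v = a then 1 else 0 := by
  classical
  simp only [outDeg, addEdge, Nat.card_eq_fintype_card, Fintype.card_subtype]
  split_ifs with hv
  · subst hv
    have hins : univ.filter (fun u => D v u ∨ v = v ∧ u = r) = insert r (univ.filter (D v)) := by
      ext u
      simp [or_comm]
    rw [hins, card_insert_of_notMem (by simpa using har)]
  · simp [hv]

lemma inDeg_addEdge [Fintype V] [DecidableEq V] (har : ¬ D a r) (v : V) :
    inDeg (addEdge D a r) v = inDeg D v + if v = r then 1 else 0 := by
  change outDeg (flip (addEdge D a r)) v = outDeg (flip D) v + _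
  rw [flip_addEdge]
  exact outDeg_addEdge (D := flip D) har v

lemma exD_addEdge_of_source [Fintype V] (ha : ∀ x, ¬ D x a) (hne : a ≠ r) (har : ¬ D a r) :
    exD (addEdge D a r) + (if 0 < exInt D r then 1 else 0) = exD D + 1 := by
  classical
  have hina : inDeg D a = 0 := by simp [inDeg, ha]
  have hpt : ∀ v, exPlus (addEdge D a r) v + (if v = r ∧ 0 < exInt D r then 1 else 0) =
      exPlus D v + if v = a then 1 else 0 := by
    intro v
    simp only [exPlus, exInt, outDeg_addEdge har, inDeg_addEdge har]
    by_cases hva : v = a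
    · subst hva
      simp [hne, hina]
    by_cases hvr : v = r
    · subst hvr
      simp only [hva, if_true, if_false, true_and]
      split_ifs <;> omega
    · simp [hva, hvr]
  have hsum := sum_congr rfl fun v (_ : v ∈ univ) => hpt v
  simp only [sum_add_distrib, ite_and, sum_ite_eq', mem_univ, if_true] at hsum
  exact hsum

end AddEdge

section Extension

variable {D : V → V → Prop} {a r : V} {Qs : List (List V)}

lemma IsPath.addEdge_cons (ha : ∀ x, ¬ D x a) (hne : a ≠ r) {t : List V}
    (hnd : (r :: t).Nodup) (hedges : ∀ e ∈ pathEdges (r :: t), D e.1 e.2) :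
    IsPath (addEdge D a r) (a :: r :: t) := by
  have hat : a ∉ t := fun hat => by
    rw [← List.tail_cons (a := r) (as := t), ← map_snd_pathEdges, List.mem_map] at hat
    obtain ⟨e, he, rfl⟩ := hat
    exact ha e.1 (hedges e he)
  refine ⟨List.nodup_cons.2 ⟨by simp [hne, hat], hnd⟩, by simp, fun e he => ?_⟩
  rw [pathEdges_cons_cons, List.mem_cons] at he
  rcases he with rfl | he
  · exact Or.inr ⟨rfl, rfl⟩
  · exact Or.inl (hedges e he)

lemma IsPathDecomp.addEdge_of_perm (hQ : IsPathDecomp D Qs) (har : ¬ D a r) {Qs' : List (List V)}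
    (hpaths : ∀ p ∈ Qs', IsPath (addEdge D a r) p)
    (hperm : (Qs'.map pathEdges).flatten.Perm ((a, r) :: (Qs.map pathEdges).flatten)) :
    IsPathDecomp (addEdge D a r) Qs' := by
  refine ⟨hpaths, hperm.nodup_iff.2 (List.nodup_cons.2 ⟨fun h => har ((hQ.2.2 a r).2 h), hQ.2.1⟩),
    fun u w => ?_⟩
  rw [hperm.mem_iff, List.mem_cons, ← hQ.2.2, addEdge, Prod.mk.injEq, or_comm]

theorem HasPerfectDecomp.addEdge_of_source [Fintype V] (hD : HasPerfectDecomp D)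
    (ha : ∀ x, ¬ D x a) (hne : a ≠ r) (har : ¬ D a r) : HasPerfectDecomp (addEdge D a r) := by
  obtain ⟨Qs, hQ, hlen⟩ := hD
  have hex := exD_addEdge_of_source ha hne har
  have hle : D ≤ addEdge D a r := fun _ _ h => Or.inl h
  by_cases hr : 0 < exInt D r
  · obtain ⟨p, hp, hhead⟩ := hQ.exists_head_eq hr
    obtain ⟨t, rfl⟩ := List.head?_eq_some_iff.1 hhead
    obtain ⟨l₁, l₂, rfl⟩ := List.append_of_mem hp
    have hnew := IsPath.addEdge_cons ha hne (hQ.1 _ hp).1 (hQ.1 _ hp).2.2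
    refine ⟨l₁ ++ (a :: r :: t) :: l₂, hQ.addEdge_of_perm har (fun q hq => ?_) ?_, ?_⟩
    · simp only [List.mem_append, List.mem_cons] at hq
      rcases hq with hq | rfl | hq
      · exact (hQ.1 q (by simp [hq])).mono hle
      · exact hnew
      · exact (hQ.1 q (by simp [hq])).mono hle
    · simp [pathEdges_cons_cons, List.perm_middle]
    · simp only [List.length_append, List.length_cons] at hlen ⊢
      rw [if_pos hr] at hex
      omega
  · have hnew := IsPath.addEdge_cons (t := []) ha hne (by simp) (by simp [pathEdges])
    refine ⟨[a, r] :: Qs, hQ.addEdge_of_perm har (fun q hq => ?_) (by rfl), ?_⟩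
    · rcases List.mem_cons.1 hq with rfl | hq
      · exact hnew
      · exact (hQ.1 q hq).mono hle
    · rw [if_neg hr] at hex
      simp only [List.length_cons]
      omega

end Extension

namespace HasPerfectDecomp

variable [Fintype V] {D D₀ : V → V → Prop}

theorem flip (hD : HasPerfectDecomp D) : HasPerfectDecomp (flip D) := by
  obtain ⟨Qs, hQ, hlen⟩ := hD
  exact ⟨Qs.map List.reverse, hQ.reverse, by rw [List.length_map, hlen, exD_flip]⟩

theorem addEdge_of_sink {r b : V} (hD : HasPerfectDecomp D) (hb : ∀ x, ¬ D b x) (hne : r ≠ b)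
    (hrb : ¬ D r b) : HasPerfectDecomp (addEdge D r b) := by
  have := (hD.flip.addEdge_of_source (a := b) (r := r) hb hne.symm hrb).flip
  rwa [flip_addEdge] at this

theorem of_le_of_source_or_sink (h₀ : HasPerfectDecomp D₀) (hle : D₀ ≤ D)
    (hnew : ∀ u w, D u w → ¬ D₀ u w → (∀ x, ¬ D x u) ∨ ∀ x, ¬ D w x) :
    HasPerfectDecomp D := by
  classical
  let extra : Finset (V × V) := univ.filter fun e => D e.1 e.2 ∧ ¬ D₀ e.1 e.2
  suffices h : ∀ S ⊆ extra, HasPerfectDecomp fun u w => D₀ u w ∨ (u, w) ∈ S by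
    convert h extra subset_rfl using 3 with u w
    by_cases h₀ : D₀ u w
    · simp [h₀, hle u w h₀]
    · simp [extra, h₀]
  intro S hS
  induction S using Finset.induction_on with
  | empty => simpa using h₀
  | insert e S heS ih =>
    obtain ⟨a, r⟩ := e
    obtain ⟨har, har₀⟩ : D a r ∧ ¬ D₀ a r := by simpa [extra] using hS (mem_insert_self _ _)
    have hSle : (fun u w => D₀ u w ∨ (u, w) ∈ S) ≤ D := by
      rintro u w (h | h)
      · exact hle u w h
      · exact (mem_filter.1 (hS (mem_insert_of_mem h))).2.1
    have hS_ar : ¬ (D₀ a r ∨ (a, r) ∈ S) := by simp [har₀, heS]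
    have heq : (fun u w => D₀ u w ∨ (u, w) ∈ insert (a, r) S) =
        addEdge (fun u w => D₀ u w ∨ (u, w) ∈ S) a r := by
      funext u w
      simp only [addEdge, mem_insert, Prod.mk.injEq, eq_iff_iff]
      tauto
    rw [heq]
    rcases hnew a r har har₀ with ha | hr
    · exact (ih ((subset_insert _ _).trans hS)).addEdge_of_source
        (fun x hx => ha x (hSle _ _ hx)) (fun h => ha a (h ▸ har)) hS_ar
    · exact (ih ((subset_insert _ _).trans hS)).addEdge_of_sink
        (fun x hx => hr x (hSle _ _ hx)) (fun h => hr r (h ▸ har)) hS_ar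

end HasPerfectDecomp

/-- Let `D` have a vertex partition `A⁺ ∪ A⁻ ∪ R` with no edges from `R` to
`A⁺`, none from `A⁻` to `R`, and none inside `A⁺ ∪ A⁻`. If `D[R]` has a perfect decomposition
(a partition of its edges into exactly `ex(D[R])` paths), then so does `D`. -/
theorem perfect_decomp_of_induced {V : Type*} [Fintype V] (D : V → V → Prop)
    (Ap Am R : Set V)
    (hpart : ∀ v : V, (v ∈ Ap ∧ v ∉ Am ∧ v ∉ R) ∨ (v ∉ Ap ∧ v ∈ Am ∧ v ∉ R) ∨
      (v ∉ Ap ∧ v ∉ Am ∧ v ∈ R))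
    (hRA : ∀ u ∈ R, ∀ a ∈ Ap, ¬ D u a)
    (hAR : ∀ a ∈ Am, ∀ u ∈ R, ¬ D a u)
    (hAA : ∀ u ∈ Ap ∪ Am, ∀ w ∈ Ap ∪ Am, ¬ D u w)
    (hR : ∃ Ps : List (List V), IsPathDecomp (fun u v => D u v ∧ u ∈ R ∧ v ∈ R) Ps ∧
      Ps.length = exD (fun u v => D u v ∧ u ∈ R ∧ v ∈ R)) :
    ∃ Qs : List (List V), IsPathDecomp D Qs ∧ Qs.length = exD D := by
  have hsource : ∀ a ∈ Ap, ∀ x, ¬ D x a := fun a ha x hx => by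
    rcases hpart x with ⟨hx', -, -⟩ | ⟨-, hx', -⟩ | ⟨-, -, hx'⟩
    exacts [hAA x (.inl hx') a (.inl ha) hx, hAA x (.inr hx') a (.inl ha) hx, hRA x hx' a ha hx]
  have hsink : ∀ b ∈ Am, ∀ x, ¬ D b x := fun b hb x hx => by
    rcases hpart x with ⟨hx', -, -⟩ | ⟨-, hx', -⟩ | ⟨-, -, hx'⟩
    exacts [hAA b (.inr hb) x (.inl hx') hx, hAA b (.inr hb) x (.inr hx') hx, hAR b hb x hx' hx]
  refine HasPerfectDecomp.of_le_of_source_or_sink hR (fun _ _ h => h.1) fun u w huw hnot => ?_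
  rcases hpart u with ⟨hu, -, -⟩ | ⟨-, hu, -⟩ | ⟨-, -, hu⟩
  · exact .inl (hsource u hu)
  · exact absurd huw (hsink u hu w)
  · rcases hpart w with ⟨hw, -, -⟩ | ⟨-, hw, -⟩ | ⟨-, -, hw⟩
    · exact absurd huw (hRA u hu w hw)
    · exact .inr (hsink w hw)
    · exact absurd ⟨huw, hu, hw⟩ hnot
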